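/- Let h : (-π-δ, π+δ) × ℝ^d → ℂ be polyharmonic of order N (i.e., C^{2N} with (∂²/∂t² + Δ_y)^N h = 0), odd at t = 0, t = π, and t = -π. Then for each positive integer k, the Fourier coefficient a_k(y) = (1/π) ∫_{-π}^{π} h(t,y) sin(kt) dt satisfies (Δ_y - k²)^N a_k(y) = 0 for all y ∈ ℝ^d. -/

import Mathlib

open Set

/-- The Laplacian of `f : ℝ × ℝ^d → ℂ` in all `1 + d` variables, computed as the
sum of second derivatives along the coordinate directions. -/
noncomputable def lap {d : ℕ} (f : ℝ × EuclideanSpace ℝ (Fin d) → ℂ) :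
    ℝ × EuclideanSpace ℝ (Fin d) → ℂ := fun p =>
  iteratedDeriv 2 (fun s : ℝ => f (p.1 + s, p.2)) 0 +
    ∑ i : Fin d,
      iteratedDeriv 2 (fun s : ℝ => f (p.1, p.2 + s • EuclideanSpace.single i (1 : ℝ))) 0

/-- `f` is polyharmonic of order `N` on `S`: it is `C^{2N}` on `S` and `Δ^N f = 0` on `S`. -/
def PolyharmonicOn {d : ℕ} (N : ℕ) (f : ℝ × EuclideanSpace ℝ (Fin d) → ℂ)
    (S : Set (ℝ × EuclideanSpace ℝ (Fin d))) : Prop :=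
  ContDiffOn ℝ (2 * N : ℕ) f S ∧ ∀ p ∈ S, (lap^[N] f) p = 0

/-- `u` is odd at `t₀` relative to the strip `(a,b) × ℝ^d`. -/
def OddAt {d : ℕ} (u : ℝ × EuclideanSpace ℝ (Fin d) → ℂ) (a b t₀ : ℝ) : Prop :=
  ∀ t : ℝ, ∀ y : EuclideanSpace ℝ (Fin d), t₀ + t ∈ Ioo a b → t₀ - t ∈ Ioo a b →
    u (t₀ + t, y) = -u (t₀ - t, y)

/-- The Laplacian in the `y`-variables for functions on `ℝ^d`. -/
noncomputable def lapY {d : ℕ} (f : EuclideanSpace ℝ (Fin d) → ℂ) :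
    EuclideanSpace ℝ (Fin d) → ℂ := fun y =>
  ∑ i : Fin d, iteratedDeriv 2 (fun s : ℝ => f (y + s • EuclideanSpace.single i (1 : ℝ))) 0

/-!
Write `Δ = ∂²ₜ + Δ_y`. Differentiating under the integral sign moves `Δ_y` inside the sine
coefficient, and integrating by parts twice against `sin (k t)` turns `∂²ₜ` into multiplication
by `-k²`; the boundary terms vanish because `sin (± k π) = 0` and oddness forces `f (± π, ·) = 0`.
So the sine coefficient of `Δ f` is `(Δ_y - k²)` applied to the sine coefficient of `f`. Since `Δ`
preserves oddness at `± π` (the reflection `t ↦ 2c - t` commutes with second derivatives), this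
applies to every `Δ^m h` with `m < N`, and `N` iterations reach the coefficient of `Δ^N h = 0`.
-/

open Filter Topology MeasureTheory Metric Real
open scoped Interval

section LineDerivatives

variable {E F : Type*} [NormedAddCommGroup E] [NormedSpace ℝ E]
  [NormedAddCommGroup F] [NormedSpace ℝ F] {f : E → F} {U : Set E}

theorem ContDiffOn.fderiv_apply_const_of_isOpen (hU : IsOpen U) {n : ℕ}
    (hf : ContDiffOn ℝ (n + 1) f U) (v : E) : ContDiffOn ℝ n (fun q => fderiv ℝ f q v) U :=
  (hf.fderiv_of_isOpen hU le_rfl).clm_apply contDiffOn_const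

theorem hasDerivAt_comp_add_smul_of_contDiffOn (hU : IsOpen U) (hf : ContDiffOn ℝ 1 f U)
    {q v : E} {s : ℝ} (hq : q + s • v ∈ U) :
    HasDerivAt (fun s : ℝ => f (q + s • v)) (fderiv ℝ f (q + s • v) v) s := by
  have hline : HasDerivAt (fun s : ℝ => q + s • v) v s := by
    simpa using ((hasDerivAt_id s).smul_const v).const_add q
  exact ((hf.differentiableOn one_ne_zero).differentiableAt (hU.mem_nhds hq)).hasFDerivAt
    |>.comp_hasDerivAt s hline

theorem iteratedDeriv_two_comp_add_smul (hU : IsOpen U) (hf : ContDiffOn ℝ 2 f U)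
    {q v : E} {s : ℝ} (hq : q + s • v ∈ U) :
    iteratedDeriv 2 (fun s : ℝ => f (q + s • v)) s =
      fderiv ℝ (fun p => fderiv ℝ f p v) (q + s • v) v := by
  have hline : IsOpen ((fun s : ℝ => q + s • v) ⁻¹' U) := hU.preimage (by fun_prop)
  have hderiv : deriv (fun s : ℝ => f (q + s • v)) =ᶠ[𝓝 s]
      fun s => fderiv ℝ f (q + s • v) v := by
    filter_upwards [hline.mem_nhds hq] with s hs
    exact (hasDerivAt_comp_add_smul_of_contDiffOn hU (hf.of_le (by norm_num)) hs).deriv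
  rw [iteratedDeriv_succ, iteratedDeriv_one, hderiv.deriv_eq]
  exact (hasDerivAt_comp_add_smul_of_contDiffOn hU
    (hf.fderiv_apply_const_of_isOpen (n := 1) hU v) hq).deriv

theorem ContDiffOn.iteratedDeriv_two_comp_add_smul (hU : IsOpen U) {n : ℕ}
    (hf : ContDiffOn ℝ (n + 2) f U) (v : E) :
    ContDiffOn ℝ n (fun q => iteratedDeriv 2 (fun s : ℝ => f (q + s • v)) 0) U := by
  have hf1 : ContDiffOn ℝ (n + 1) (fun q => fderiv ℝ f q v) U :=
    hf.fderiv_apply_const_of_isOpen (n := n + 1) hU v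
  refine (hf1.fderiv_apply_const_of_isOpen hU v).congr fun q hq => ?_
  have hq' : q + (0 : ℝ) • v ∈ U := by simpa using hq
  simpa using _root_.iteratedDeriv_two_comp_add_smul hU (hf.of_le (by norm_cast; omega)) hq'

end LineDerivatives

section ParametricIntegral

variable {F : Type*} [NormedAddCommGroup F] [NormedSpace ℝ F]
  {φ : ℝ × ℝ → F} {U : Set (ℝ × ℝ)} {a b : ℝ}

theorem hasDerivAt_intervalIntegral_of_contDiffOn (hU : IsOpen U) (hφ : ContDiffOn ℝ 1 φ U)
    (hab : uIcc a b ×ˢ univ ⊆ U) (s₀ : ℝ) :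
    HasDerivAt (fun s => ∫ t in a..b, φ (t, s))
      (∫ t in a..b, fderiv ℝ φ (t, s₀) (0, 1)) s₀ := by
  have hφ' : ContinuousOn (fun p => fderiv ℝ φ p (0, 1)) U :=
    (hφ.fderiv_apply_const_of_isOpen (n := 0) hU _).continuousOn
  have hmem : ∀ t ∈ uIcc a b, ∀ s : ℝ, (t, s) ∈ U := fun t ht s => hab ⟨ht, trivial⟩
  have hslice : ∀ {g : ℝ × ℝ → F}, ContinuousOn g U → ∀ s : ℝ,
      AEStronglyMeasurable (fun t => g (t, s)) (volume.restrict (Ι a b)) := fun hg s =>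
    ((hg.comp (by fun_prop) fun t ht => hmem t ht s).mono uIoc_subset_uIcc).aestronglyMeasurable
      measurableSet_uIoc
  obtain ⟨C, hC⟩ := (isCompact_uIcc.prod (isCompact_closedBall s₀ 1)).exists_bound_of_continuousOn
    (hφ'.mono fun p hp => hmem p.1 hp.1 p.2)
  refine (intervalIntegral.hasDerivAt_integral_of_dominated_loc_of_deriv_le
    (F' := fun s t => fderiv ℝ φ (t, s) (0, 1)) (bound := fun _ => C) (ball_mem_nhds s₀ one_pos)
    (.of_forall (hslice hφ.continuousOn))
    ?_ (hslice hφ' s₀) ?_ intervalIntegrable_const ?_).2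
  · exact (hφ.continuousOn.comp (by fun_prop) fun t ht => hmem t ht s₀).intervalIntegrable
  · refine .of_forall fun t ht s hs => hC (t, s) ⟨uIoc_subset_uIcc ht, ball_subset_closedBall hs⟩
  · refine .of_forall fun t ht s _ => ?_
    have hq : ((t, 0) : ℝ × ℝ) + s • ((0, 1) : ℝ × ℝ) ∈ U := by
      simpa using hmem t (uIoc_subset_uIcc ht) s
    simpa using hasDerivAt_comp_add_smul_of_contDiffOn hU hφ hq

theorem iteratedDeriv_two_intervalIntegral_of_contDiffOn (hU : IsOpen U)
    (hφ : ContDiffOn ℝ 2 φ U) (hab : uIcc a b ×ˢ univ ⊆ U) (s₀ : ℝ) :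
    iteratedDeriv 2 (fun s => ∫ t in a..b, φ (t, s)) s₀ =
      ∫ t in a..b, iteratedDeriv 2 (fun s => φ (t, s)) s₀ := by
  have hφ' : ContDiffOn ℝ 1 (fun p => fderiv ℝ φ p (0, 1)) U :=
    hφ.fderiv_apply_const_of_isOpen (n := 1) hU _
  have hderiv : deriv (fun s => ∫ t in a..b, φ (t, s)) =
      fun s => ∫ t in a..b, fderiv ℝ φ (t, s) (0, 1) :=
    funext fun s => (hasDerivAt_intervalIntegral_of_contDiffOn hU (hφ.of_le one_le_two) hab s).deriv
  rw [iteratedDeriv_succ, iteratedDeriv_one, hderiv,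
    (hasDerivAt_intervalIntegral_of_contDiffOn hU hφ' hab s₀).deriv]
  refine intervalIntegral.integral_congr fun t ht => ?_
  have hq : ((t, 0) : ℝ × ℝ) + s₀ • ((0, 1) : ℝ × ℝ) ∈ U := by simpa using hab ⟨ht, trivial⟩
  simpa using (iteratedDeriv_two_comp_add_smul hU hφ hq).symm

end ParametricIntegral

section GreenIdentity

variable {A : Type*} {U : Set ℝ} {a b : ℝ}

theorem integral_mul_deriv_deriv_eq_neg [NormedRing A] [NormedAlgebra ℝ A] [CompleteSpace A]
    {g u : ℝ → A} (hU : IsOpen U) (hab : uIcc a b ⊆ U)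
    (hu : ContDiffOn ℝ 1 u U) (hg : ContDiffOn ℝ 2 g U) (hua : u a = 0) (hub : u b = 0) :
    ∫ x in a..b, u x * deriv (deriv g) x = -∫ x in a..b, deriv u x * deriv g x := by
  have hg' : ContDiffOn ℝ 1 (deriv g) U := hg.deriv_of_isOpen hU (by norm_num)
  have hasDeriv : ∀ {v : ℝ → A}, ContDiffOn ℝ 1 v U → ∀ x ∈ uIcc a b,
      HasDerivAt v (deriv v x) x :=
    fun hv x hx => ((hv.differentiableOn one_ne_zero).differentiableAt
      (hU.mem_nhds (hab hx))).hasDerivAt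
  have hint : ∀ {v : ℝ → A}, ContDiffOn ℝ 1 v U → IntervalIntegrable (deriv v) volume a b :=
    fun hv => ((hv.continuousOn_deriv_of_isOpen hU le_rfl).mono hab).intervalIntegrable
  rw [intervalIntegral.integral_mul_deriv_eq_deriv_mul (hasDeriv hu) (hasDeriv hg') (hint hu)
    (hint hg'), hua, hub]
  simp

theorem integral_deriv_deriv_mul_eq_mul_deriv_deriv [NormedCommRing A] [NormedAlgebra ℝ A]
    [CompleteSpace A] {g u : ℝ → A} (hU : IsOpen U) (hab : uIcc a b ⊆ U)
    (hg : ContDiffOn ℝ 2 g U) (hu : ContDiffOn ℝ 2 u U) (hga : g a = 0) (hgb : g b = 0)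
    (hua : u a = 0) (hub : u b = 0) :
    ∫ x in a..b, deriv (deriv g) x * u x = ∫ x in a..b, g x * deriv (deriv u) x := by
  simp_rw [mul_comm (deriv (deriv g) _)]
  rw [integral_mul_deriv_deriv_eq_neg hU hab (hu.of_le one_le_two) hg hua hub,
    integral_mul_deriv_deriv_eq_neg hU hab (hg.of_le one_le_two) hu hga hgb]
  simp_rw [mul_comm (deriv u _)]

end GreenIdentity

theorem contDiff_ofReal_sin_mul {n : WithTop ℕ∞} (k : ℝ) :
    ContDiff ℝ n fun t : ℝ => (sin (k * t) : ℂ) :=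
  Complex.ofRealCLM.contDiff.comp (contDiff_sin.comp (contDiff_const.mul contDiff_id))

theorem deriv_deriv_ofReal_sin_mul (k : ℝ) :
    deriv (deriv fun t : ℝ => (sin (k * t) : ℂ)) =
      fun t => -(k : ℂ) ^ 2 * sin (k * t) := by
  have hsin : ∀ t : ℝ, HasDerivAt (fun t : ℝ => (sin (k * t) : ℂ))
      (k * cos (k * t)) t := fun t => by
    simpa [mul_comm] using (((hasDerivAt_id t).const_mul k).sin).ofReal_comp
  have hcos : ∀ t : ℝ, HasDerivAt (fun t : ℝ => (k * cos (k * t) : ℂ))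
      (-(k : ℂ) ^ 2 * sin (k * t)) t := fun t => by
    refine ((((hasDerivAt_id t).const_mul k).cos).ofReal_comp.const_mul (k : ℂ)).congr_deriv ?_
    simp only [id_eq, mul_one, Complex.ofReal_neg, Complex.ofReal_mul]
    ring
  ext t
  rw [funext fun t => (hsin t).deriv, (hcos t).deriv]

section SineCoefficient

variable {E : Type*} [NormedAddCommGroup E] [NormedSpace ℝ E]

/-- Omits the normalizing factor `1/π` of the Fourier sine coefficient. -/
noncomputable def sineCoeff (k : ℕ) (f : ℝ × E → ℂ) (y : E) : ℂ :=
  ∫ t in -π..π, f (t, y) * sin (k * t)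

variable {f : ℝ × E → ℂ} {U : Set (ℝ × E)}

theorem intervalIntegrable_iteratedDeriv_two_mul_sin (hU : IsOpen U)
    (hsub : Icc (-π) π ×ˢ univ ⊆ U) (hf : ContDiffOn ℝ 2 f U) (k : ℕ) (z : E) (v : ℝ × E) :
    IntervalIntegrable (fun t => iteratedDeriv 2 (fun s : ℝ => f ((t, z) + s • v)) 0 *
      sin (k * t)) volume (-π) π := by
  have hcont := (hf.iteratedDeriv_two_comp_add_smul (n := 0) hU v).continuousOn
  refine ContinuousOn.intervalIntegrable (ContinuousOn.mul ?_ (by fun_prop))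
  rw [uIcc_of_le (by linarith [pi_pos])]
  exact hcont.comp (by fun_prop) fun t ht => hsub ⟨ht, trivial⟩

theorem integral_iteratedDeriv_two_fst_mul_sin (hU : IsOpen U)
    (hsub : Icc (-π) π ×ˢ univ ⊆ U) (hf : ContDiffOn ℝ 2 f U) (k : ℕ) {z : E}
    (hπ : f (π, z) = 0) (hmπ : f (-π, z) = 0) :
    ∫ t in -π..π, iteratedDeriv 2 (fun s : ℝ => f ((t, z) + s • (1, 0))) 0 * sin (k * t) =
      -(k : ℂ) ^ 2 * sineCoeff k f z := by
  set g : ℝ → ℂ := fun x => f (x, z)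
  set u : ℝ → ℂ := fun t => sin (k * t)
  have hV : IsOpen ((fun x : ℝ => (x, z)) ⁻¹' U) := hU.preimage (by fun_prop)
  have hIcc : uIcc (-π) π ⊆ (fun x : ℝ => (x, z)) ⁻¹' U := by
    rw [uIcc_of_le (by linarith [pi_pos])]
    exact fun t ht => hsub ⟨ht, trivial⟩
  have hg : ContDiffOn ℝ 2 g ((fun x : ℝ => (x, z)) ⁻¹' U) :=
    hf.comp (by fun_prop) fun _ hx => hx
  have hu : ContDiffOn ℝ 2 u ((fun x : ℝ => (x, z)) ⁻¹' U) :=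
    (contDiff_ofReal_sin_mul k).contDiffOn
  have hline : ∀ t : ℝ, iteratedDeriv 2 (fun s : ℝ => f ((t, z) + s • (1, 0))) 0 =
      deriv (deriv g) t := fun t => by
    have : (fun s : ℝ => f ((t, z) + s • (1, 0))) = fun s => g (t + s) := by
      ext s; simp [g]
    simp only [this, iteratedDeriv_comp_const_add, add_zero]
    rw [iteratedDeriv_succ, iteratedDeriv_one]
  simp_rw [hline]
  rw [integral_deriv_deriv_mul_eq_mul_deriv_deriv hV hIcc hg hu hmπ hπ
    (by simp only [u, mul_neg, sin_neg, sin_nat_mul_pi, neg_zero, Complex.ofReal_zero])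
    (by simp only [u, sin_nat_mul_pi, Complex.ofReal_zero]),
    deriv_deriv_ofReal_sin_mul, sineCoeff, ← intervalIntegral.integral_const_mul]
  congr 1 with t
  push_cast
  ring

theorem iteratedDeriv_two_sineCoeff (hU : IsOpen U) (hsub : Icc (-π) π ×ˢ univ ⊆ U)
    (hf : ContDiffOn ℝ 2 f U) (k : ℕ) (z w : E) :
    iteratedDeriv 2 (fun s : ℝ => sineCoeff k f (z + s • w)) 0 =
      ∫ t in -π..π, iteratedDeriv 2 (fun s : ℝ => f ((t, z) + s • (0, w))) 0 * sin (k * t) := by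
  set slice : ℝ × ℝ → ℝ × E := fun p => (p.1, z + p.2 • w)
  have hV : IsOpen (slice ⁻¹' U) := hU.preimage (by fun_prop)
  have hφ : ContDiffOn ℝ 2 (fun p : ℝ × ℝ => f (slice p) * sin (k * p.1)) (slice ⁻¹' U) :=
    (hf.comp (by fun_prop : ContDiffOn ℝ 2 slice _) fun _ hp => hp).mul
      ((contDiff_ofReal_sin_mul k).comp contDiff_fst).contDiffOn
  have hsub' : uIcc (-π) π ×ˢ univ ⊆ slice ⁻¹' U := by
    rw [uIcc_of_le (by linarith [pi_pos])]
    exact fun p hp => hsub ⟨hp.1, trivial⟩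
  simp only [sineCoeff]
  rw [iteratedDeriv_two_intervalIntegral_of_contDiffOn hV hφ hsub']
  congr 1 with t
  simp [slice]

end SineCoefficient

section Laplacian

variable {d : ℕ} {f : ℝ × EuclideanSpace ℝ (Fin d) → ℂ}
  {U : Set (ℝ × EuclideanSpace ℝ (Fin d))}

theorem lap_eq_iteratedDeriv_two_comp_add_smul (f : ℝ × EuclideanSpace ℝ (Fin d) → ℂ)
    (p : ℝ × EuclideanSpace ℝ (Fin d)) :
    lap f p = iteratedDeriv 2 (fun s : ℝ => f (p + s • (1, 0))) 0 +
      ∑ i, iteratedDeriv 2 (fun s : ℝ => f (p + s • (0, EuclideanSpace.single i 1))) 0 := by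
  have hfst : ∀ s : ℝ, p + s • ((1 : ℝ), (0 : EuclideanSpace ℝ (Fin d))) = (p.1 + s, p.2) := by
    simp [Prod.ext_iff]
  have hsnd : ∀ (i : Fin d) (s : ℝ), p + s • ((0 : ℝ), EuclideanSpace.single i (1 : ℝ)) =
      (p.1, p.2 + s • EuclideanSpace.single i 1) := by
    simp [Prod.ext_iff]
  simp only [lap, hfst, hsnd]

theorem ContDiffOn.lap_of_isOpen (hU : IsOpen U) {n : ℕ} (hf : ContDiffOn ℝ (n + 2) f U) :
    ContDiffOn ℝ n (lap f) U := by
  rw [funext (lap_eq_iteratedDeriv_two_comp_add_smul f)]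
  exact (hf.iteratedDeriv_two_comp_add_smul hU _).add
    (.sum fun i _ => hf.iteratedDeriv_two_comp_add_smul hU _)

theorem ContDiffOn.iterate_lap_of_isOpen (hU : IsOpen U) {m n : ℕ}
    (hf : ContDiffOn ℝ (2 * m + n : ℕ) f U) : ContDiffOn ℝ n (lap^[m] f) U := by
  induction m generalizing f with
  | zero => simpa using hf
  | succ m ih =>
    rw [show 2 * (m + 1) + n = 2 * m + n + 2 by ring] at hf
    rw [Function.iterate_succ_apply]
    exact ih (ContDiffOn.lap_of_isOpen hU (by exact_mod_cast hf))

theorem oddAt_lap {a b c : ℝ} (hf : OddAt f a b c) : OddAt (lap f) a b c := by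
  intro t y htp htm
  have hfst : (fun s : ℝ => f (c + t + s, y)) =ᶠ[𝓝 0] fun s => -f (c - t - s, y) := by
    have hp : ∀ᶠ s : ℝ in 𝓝 0, c + t + s ∈ Ioo a b :=
      (continuous_const.add continuous_id).continuousAt.preimage_mem_nhds
        (isOpen_Ioo.mem_nhds (by simpa using htp))
    have hm : ∀ᶠ s : ℝ in 𝓝 0, c - t - s ∈ Ioo a b :=
      (continuous_const.sub continuous_id).continuousAt.preimage_mem_nhds
        (isOpen_Ioo.mem_nhds (by simpa using htm))
    filter_upwards [hp, hm] with s hps hms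
    simpa [add_assoc, sub_sub] using hf (t + s) y (by rwa [← add_assoc]) (by rwa [← sub_sub])
  have hreflect : iteratedDeriv 2 (fun s : ℝ => f (c - t - s, y)) 0 =
      iteratedDeriv 2 (fun s : ℝ => f (c - t + s, y)) 0 := by
    rw [iteratedDeriv_comp_const_sub 2 (fun u => f (u, y)),
      iteratedDeriv_comp_const_add 2 (fun u => f (u, y))]
    simp
  have hsnd : ∀ i, (fun s : ℝ => f (c + t, y + s • EuclideanSpace.single i 1)) =
      fun s => -f (c - t, y + s • EuclideanSpace.single i 1) :=
    fun i => funext fun s => hf t _ htp htm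
  simp only [lap, hsnd, hfst.iteratedDeriv_eq, iteratedDeriv_fun_neg, hreflect,
    Finset.sum_neg_distrib, neg_add]

theorem oddAt_iterate_lap {a b c : ℝ} (hf : OddAt f a b c) (m : ℕ) :
    OddAt (lap^[m] f) a b c := by
  induction m with
  | zero => exact hf
  | succ m ih => exact Function.iterate_succ_apply' lap m f ▸ oddAt_lap ih

theorem OddAt.apply_self_eq_zero {a b c : ℝ} (hf : OddAt f a b c) (hc : c ∈ Ioo a b)
    (y : EuclideanSpace ℝ (Fin d)) : f (c, y) = 0 := by
  have := hf 0 y (by simpa using hc) (by simpa using hc)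
  simp only [add_zero, sub_zero] at this
  exact CharZero.eq_neg_self_iff.mp this


theorem sineCoeff_lap (hU : IsOpen U) (hsub : Icc (-π) π ×ˢ univ ⊆ U)
    (hf : ContDiffOn ℝ 2 f U) (k : ℕ) {z : EuclideanSpace ℝ (Fin d)} (hπ : f (π, z) = 0)
    (hmπ : f (-π, z) = 0) :
    sineCoeff k (lap f) z = lapY (sineCoeff k f) z - (k : ℂ) ^ 2 * sineCoeff k f z := by
  have hint := intervalIntegrable_iteratedDeriv_two_mul_sin hU hsub hf k z
  simp only [lapY, iteratedDeriv_two_sineCoeff hU hsub hf]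
  rw [sineCoeff]
  simp only [lap_eq_iteratedDeriv_two_comp_add_smul, add_mul, Finset.sum_mul]
  rw [intervalIntegral.integral_add (hint _)
      (by simpa only [Finset.sum_fn] using IntervalIntegrable.sum Finset.univ fun i _ =>
        hint (0, EuclideanSpace.single i 1)),
    intervalIntegral.integral_finsetSum fun i _ => hint _,
    integral_iteratedDeriv_two_fst_mul_sin hU hsub hf k hπ hmπ]
  ring

theorem lapY_const_smul (c : ℝ) (u : EuclideanSpace ℝ (Fin d) → ℂ) :
    lapY (fun y => c • u y) = fun y => c • lapY u y := by
  ext y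
  simp only [lapY, iteratedDeriv_fun_const_smul_field, Finset.smul_sum]

theorem iterate_lapY_sub_sq_smul_sineCoeff {a b : ℝ} (hπ : π ∈ Ioo a b) (hmπ : -π ∈ Ioo a b)
    (hU : IsOpen U) (hsub : Icc (-π) π ×ˢ univ ⊆ U) {m : ℕ} (hf : ContDiffOn ℝ (2 * m : ℕ) f U)
    (hoddp : OddAt f a b π) (hoddm : OddAt f a b (-π)) (k : ℕ) (c : ℝ) :
    (fun u : EuclideanSpace ℝ (Fin d) → ℂ => fun z => lapY u z - (k : ℂ) ^ 2 * u z)^[m]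
      (fun z => c • sineCoeff k f z) = fun z => c • sineCoeff k (lap^[m] f) z := by
  induction m with
  | zero => rfl
  | succ m ih =>
    have hf2 : ContDiffOn ℝ 2 (lap^[m] f) U := by
      have := hf.of_le (Nat.cast_le.mpr (by omega : 2 * m + 2 ≤ 2 * (m + 1)))
      exact_mod_cast this.iterate_lap_of_isOpen hU
    ext z
    rw [Function.iterate_succ_apply', ih (hf.of_le (Nat.cast_le.mpr (by omega))),
      lapY_const_smul, Function.iterate_succ_apply', sineCoeff_lap hU hsub hf2 k
        ((oddAt_iterate_lap hoddp m).apply_self_eq_zero hπ z)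
        ((oddAt_iterate_lap hoddm m).apply_self_eq_zero hmπ z)]
    simp only [smul_sub, Complex.real_smul]
    ring

end Laplacian

theorem fourier_coeff_polyharmonic_general {d N : ℕ} (δ : ℝ) (hδ : 0 < δ)
    (h : ℝ × EuclideanSpace ℝ (Fin d) → ℂ)
    (hpoly : PolyharmonicOn N h
      (Ioo (-Real.pi - δ) (Real.pi + δ) ×ˢ (univ : Set (EuclideanSpace ℝ (Fin d)))))
    (hoddp : OddAt h (-Real.pi - δ) (Real.pi + δ) Real.pi)
    (hoddm : OddAt h (-Real.pi - δ) (Real.pi + δ) (-Real.pi))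
    (k : ℕ) :
    ∀ y : EuclideanSpace ℝ (Fin d),
      ((fun f : EuclideanSpace ℝ (Fin d) → ℂ =>
          fun z => lapY f z - (k : ℂ) ^ 2 * f z)^[N]
        (fun z => (Real.pi)⁻¹ •
          ∫ t in (-Real.pi : ℝ)..Real.pi, h (t, z) * (Real.sin (k * t) : ℂ))) y = 0 := by
  intro y
  obtain ⟨hreg, hzero⟩ := hpoly
  have hsub : Icc (-π) π ×ˢ univ ⊆
      Ioo (-π - δ) (π + δ) ×ˢ (univ : Set (EuclideanSpace ℝ (Fin d))) :=
    prod_mono (Icc_subset_Ioo (by linarith) (by linarith)) le_rfl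
  have hvanish : sineCoeff k (lap^[N] h) y = 0 := by
    refine (intervalIntegral.integral_congr (g := 0) fun t ht => ?_).trans (by simp)
    rw [uIcc_of_le (by linarith [pi_pos])] at ht
    simp [hzero _ (hsub (mk_mem_prod ht (mem_univ y)))]
  have hcoeff := iterate_lapY_sub_sq_smul_sineCoeff ⟨by linarith [pi_pos], by linarith⟩
    ⟨by linarith, by linarith [pi_pos]⟩ (isOpen_Ioo.prod isOpen_univ) hsub hreg hoddp hoddm k π⁻¹
  exact congrFun hcoeff y ▸ by simp [hvanish]

/-- if `h` is polyharmonic of order `N` on `(-π-δ, π+δ) × ℝ^d` and odd at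
`t = 0`, `t = π` and `t = -π`, then the sine Fourier coefficients
`a_k(y) = (1/π) ∫_{-π}^{π} h(t,y) sin(kt) dt` satisfy `(Δ_y - k²)^N a_k = 0`. -/
theorem fourier_coeff_polyharmonic {d N : ℕ} (δ : ℝ) (hδ : 0 < δ)
    (h : ℝ × EuclideanSpace ℝ (Fin d) → ℂ)
    (hpoly : PolyharmonicOn N h
      (Ioo (-Real.pi - δ) (Real.pi + δ) ×ˢ (univ : Set (EuclideanSpace ℝ (Fin d)))))
    (hodd0 : OddAt h (-Real.pi - δ) (Real.pi + δ) 0)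
    (hoddp : OddAt h (-Real.pi - δ) (Real.pi + δ) Real.pi)
    (hoddm : OddAt h (-Real.pi - δ) (Real.pi + δ) (-Real.pi))
    (k : ℕ) (hk : 1 ≤ k) :
    ∀ y : EuclideanSpace ℝ (Fin d),
      ((fun f : EuclideanSpace ℝ (Fin d) → ℂ =>
          fun z => lapY f z - (k : ℂ) ^ 2 * f z)^[N]
        (fun z => (Real.pi)⁻¹ •
          ∫ t in (-Real.pi : ℝ)..Real.pi, h (t, z) * (Real.sin (k * t) : ℂ))) y = 0 :=
  fourier_coeff_polyharmonic_general δ hδ h hpoly hoddp hoddm k
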